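/- Under the Maxwell modal equations for two nondegenerate guided modes n, m (k_n ≠ k_m real) of a lossless nonmagnetic anisotropic waveguide with Hermitian permittivity, the mode profiles satisfy the momentum orthogonality condition ∫_{ℝ²} [E_n ⊙ conj(D_m) + conj(E_m) ⊙ D_n + conj(H_m) ⊙ B_n + H_n ⊙ conj(B_m)] dx dy = 0, where X ⊙ Y := ½ (X_x Y_x + X_y Y_y − X_z Y_z). -/

import Mathlib

open MeasureTheory Complex Matrix

/-- Bilinear (unconjugated) dot product on ℂ³. -/
noncomputable def cdot (X Y : Fin 3 → ℂ) : ℂ := ∑ i, X i * Y i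

/-- Cross product on ℂ³ (bilinear extension of the real one). -/
noncomputable def ccross (X Y : Fin 3 → ℂ) : Fin 3 → ℂ :=
  ![X 1 * Y 2 - X 2 * Y 1, X 2 * Y 0 - X 0 * Y 2, X 0 * Y 1 - X 1 * Y 0]

/-- Partial derivative along coordinate `i` on ℝ³. -/
noncomputable def pd {E : Type*} [NormedAddCommGroup E] [NormedSpace ℝ E]
    (i : Fin 3) (f : (Fin 3 → ℝ) → E) (p : Fin 3 → ℝ) : E :=
  fderiv ℝ f p (Pi.single i 1)

/-- Divergence of a vector field on ℝ³. -/
noncomputable def div3 (F : (Fin 3 → ℝ) → Fin 3 → ℂ) (p : Fin 3 → ℝ) : ℂ :=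
  ∑ i, pd i (fun q => F q i) p

/-- Curl of a vector field on ℝ³. -/
noncomputable def curl3 (F : (Fin 3 → ℝ) → Fin 3 → ℂ) (p : Fin 3 → ℝ) : Fin 3 → ℂ :=
  ![pd 1 (fun q => F q 2) p - pd 2 (fun q => F q 1) p,
    pd 2 (fun q => F q 0) p - pd 0 (fun q => F q 2) p,
    pd 0 (fun q => F q 1) p - pd 1 (fun q => F q 0) p]

/-- Modal field from a transverse profile. -/
noncomputable def modal (P : ℝ × ℝ → Fin 3 → ℂ) (k : ℂ) : (Fin 3 → ℝ) → Fin 3 → ℂ :=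
  fun p i => P (p 0, p 1) i * Complex.exp (Complex.I * k * (p 2 : ℂ))

/-- Componentwise complex conjugation. -/
noncomputable def cconj (X : Fin 3 → ℂ) : Fin 3 → ℂ := fun i => (starRingEnd ℂ) (X i)

/-- The ⊙-product. -/
noncomputable def odot (X Y : Fin 3 → ℂ) : ℂ := (X 0 * Y 0 + X 1 * Y 1 - X 2 * Y 2) / 2






noncomputable def Lproj : (Fin 3 → ℝ) →L[ℝ] ℝ × ℝ :=
  (ContinuousLinearMap.proj 0).prod (ContinuousLinearMap.proj 1)

noncomputable def zc (k : ℝ) : (Fin 3 → ℝ) →L[ℝ] ℂ :=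
  (Complex.I * k) • (Complex.ofRealCLM.comp (ContinuousLinearMap.proj 2))

lemma modal_hasFDerivAt (P : ℝ × ℝ → Fin 3 → ℂ) (hP : ContDiff ℝ (⊤ : ℕ∞) P) (k : ℝ) (i : Fin 3)
    (p : Fin 3 → ℝ) :
    HasFDerivAt (fun p' => modal P (k : ℂ) p' i)
      (P (p 0, p 1) i • (Complex.exp (Complex.I * k * (p 2 : ℂ)) • zc k)
        + Complex.exp (Complex.I * k * (p 2 : ℂ)) •
          ((fderiv ℝ (fun r => P r i) (p 0, p 1)).comp Lproj)) p := by
  have hPi : Differentiable ℝ (fun r => P r i) :=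
    (ContinuousLinearMap.proj i : (Fin 3 → ℂ) →L[ℝ] ℂ).differentiable.comp (hP.differentiable (by simp))
  have hL : HasFDerivAt (fun p' : Fin 3 → ℝ => (p' 0, p' 1)) Lproj p :=
    Lproj.hasFDerivAt
  have h1 : HasFDerivAt (fun p' : Fin 3 → ℝ => P (p' 0, p' 1) i)
      ((fderiv ℝ (fun r => P r i) (p 0, p 1)).comp Lproj) p :=
    (hPi.differentiableAt.hasFDerivAt).comp p hL
  have hz0 : HasFDerivAt (fun p' : Fin 3 → ℝ => ((p' 2 : ℝ) : ℂ))
      (Complex.ofRealCLM.comp (ContinuousLinearMap.proj 2)) p :=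
    (Complex.ofRealCLM.comp (ContinuousLinearMap.proj 2 : (Fin 3 → ℝ) →L[ℝ] ℝ)).hasFDerivAt
  have hz : HasFDerivAt (fun p' : Fin 3 → ℝ => Complex.I * k * (p' 2 : ℂ)) (zc k) p :=
    hz0.const_mul _
  have h2 : HasFDerivAt (fun p' : Fin 3 → ℝ => Complex.exp (Complex.I * k * (p' 2 : ℂ)))
      (Complex.exp (Complex.I * k * (p 2 : ℂ)) • zc k) p := hz.cexp
  exact h1.mul h2

lemma pd_modal (P : ℝ × ℝ → Fin 3 → ℂ) (hP : ContDiff ℝ (⊤ : ℕ∞) P) (k : ℝ) (i : Fin 3) (q : ℝ × ℝ)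
    (j : Fin 3) :
    pd j (fun p' => modal P (k : ℂ) p' i) ![q.1, q.2, 0] =
      if j = 0 then fderiv ℝ (fun r => P r i) q (1, 0)
      else if j = 1 then fderiv ℝ (fun r => P r i) q (0, 1)
      else Complex.I * k * P q i := by
  have h := (modal_hasFDerivAt P hP k i ![q.1, q.2, 0]).fderiv
  have hpt : (![q.1, q.2, (0:ℝ)] 0, ![q.1, q.2, (0:ℝ)] 1) = q := by simp
  rw [pd, h]
  fin_cases j <;>
    · simp [hpt, zc, Lproj, ContinuousLinearMap.add_apply, ContinuousLinearMap.smul_apply,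
        ContinuousLinearMap.comp_apply, ContinuousLinearMap.proj_apply,
        ContinuousLinearMap.prod_apply, Pi.single_eq_same, Pi.single_eq_of_ne,
        Complex.ofRealCLM_apply, smul_eq_mul, show ((0:ℝ), (0:ℝ)) = 0 from rfl]
      try ring

lemma integrable_pderiv (g : ℝ × ℝ → ℂ) (hg : ContDiff ℝ (⊤ : ℕ∞) g) (hc : HasCompactSupport g)
    (v : ℝ × ℝ) : Integrable (fun q : ℝ × ℝ => fderiv ℝ g q v) := by
  apply Continuous.integrable_of_hasCompactSupport
  · exact (hg.fderiv_right (m := (⊤ : ℕ∞)) (by simp)).continuous.clm_apply continuous_const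
  · exact hc.fderiv_apply ℝ v

lemma integral_pderiv_eq_zero (g : ℝ × ℝ → ℂ) (hg : ContDiff ℝ (⊤ : ℕ∞) g) (hc : HasCompactSupport g)
    (v : ℝ × ℝ) : ∫ q : ℝ × ℝ, fderiv ℝ g q v = 0 := by
  have h1 : Integrable (fun q : ℝ × ℝ => fderiv ℝ g q v) := integrable_pderiv g hg hc v
  have h0 : Integrable g := hg.continuous.integrable_of_hasCompactSupport hc
  have key := integral_mul_fderiv_eq_neg_fderiv_mul_of_integrable (μ := (volume : Measure (ℝ × ℝ)))
      (f := fun _ : ℝ × ℝ => (1 : ℂ)) (g := g) (v := v)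
      (by simpa using (integrable_zero _ _ (volume : Measure (ℝ × ℝ))))
      (by simpa using h1) (by simpa using h0)
      (fun x _ => differentiableAt_const _) (fun x _ => hg.differentiable (by simp) x)
  simpa using key



lemma modal_at0 (P : ℝ × ℝ → Fin 3 → ℂ) (k : ℝ) (q : ℝ × ℝ) (i : Fin 3) :
    modal P (k : ℂ) ![q.1, q.2, 0] i = P q i := by
  simp [modal]

lemma curl_profile {P Q : ℝ × ℝ → Fin 3 → ℂ} (hP : ContDiff ℝ (⊤ : ℕ∞) P) {k : ℝ} {c : ℂ}
    (h : ∀ p, curl3 (modal P (k : ℂ)) p = fun i => c * modal Q (k : ℂ) p i) (q : ℝ × ℝ) :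
    (fderiv ℝ (fun r => P r 2) q (0, 1) - Complex.I * k * P q 1 = c * Q q 0) ∧
    (Complex.I * k * P q 0 - fderiv ℝ (fun r => P r 2) q (1, 0) = c * Q q 1) ∧
    (fderiv ℝ (fun r => P r 1) q (1, 0) - fderiv ℝ (fun r => P r 0) q (0, 1) = c * Q q 2) := by
  have h0 := congrFun (h ![q.1, q.2, 0]) 0
  have h1 := congrFun (h ![q.1, q.2, 0]) 1
  have h2 := congrFun (h ![q.1, q.2, 0]) 2
  simp only [curl3, Matrix.cons_val_zero, Matrix.cons_val_one, Matrix.head_cons,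
    Matrix.cons_val_two, Matrix.tail_cons, pd_modal P hP k _ q, modal_at0] at h0 h1 h2
  norm_num at h0 h1 h2
  exact ⟨h0, h1, h2⟩

lemma div_profile {P : ℝ × ℝ → Fin 3 → ℂ} (hP : ContDiff ℝ (⊤ : ℕ∞) P) {k : ℝ}
    (h : ∀ p, div3 (modal P (k : ℂ)) p = 0) (q : ℝ × ℝ) :
    fderiv ℝ (fun r => P r 0) q (1, 0) + fderiv ℝ (fun r => P r 1) q (0, 1)
      + Complex.I * k * P q 2 = 0 := by
  have h0 := h ![q.1, q.2, 0]
  simp only [div3, Fin.sum_univ_three, pd_modal P hP k _ q] at h0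
  norm_num at h0
  convert h0 using 2
  rfl

lemma fderiv_conj_apply (f : ℝ × ℝ → ℂ) (q v : ℝ × ℝ) :
    fderiv ℝ (fun r => (starRingEnd ℂ) (f r)) q v = (starRingEnd ℂ) (fderiv ℝ f q v) := by
  have h : (fun r => (starRingEnd ℂ) (f r)) = fun r => star (f r) := rfl
  rw [h, fderiv_star]
  rfl

lemma fderiv_mul_apply' {f g : ℝ × ℝ → ℂ} {q : ℝ × ℝ} (hf : DifferentiableAt ℝ f q)
    (hg : DifferentiableAt ℝ g q) (v : ℝ × ℝ) :
    fderiv ℝ (fun r => f r * g r) q v = f q * fderiv ℝ g q v + g q * fderiv ℝ f q v := by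
  rw [fderiv_fun_mul hf hg]
  simp [smul_eq_mul]

lemma fderiv_add_apply' {f g : ℝ × ℝ → ℂ} {q : ℝ × ℝ} (hf : DifferentiableAt ℝ f q)
    (hg : DifferentiableAt ℝ g q) (v : ℝ × ℝ) :
    fderiv ℝ (fun r => f r + g r) q v = fderiv ℝ f q v + fderiv ℝ g q v := by
  rw [fderiv_fun_add hf hg]; rfl

/-- momentum orthogonality of two nondegenerate guided modes:
`∫_{ℝ²} [E_n ⊙ conj(D_m) + conj(E_m) ⊙ D_n + conj(H_m) ⊙ B_n + H_n ⊙ conj(B_m)] = 0`,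
with `X ⊙ Y = ½(X_x Y_x + X_y Y_y − X_z Y_z)`. -/
theorem momentum_orthogonality
    (En Hn Dn Bn Em Hm Dm Bm : ℝ × ℝ → Fin 3 → ℂ)
    (kn km ω ε₀ μ₀ : ℝ)
    (ε : ℝ × ℝ → Matrix (Fin 3) (Fin 3) ℂ)
    (hεH : ∀ q, (ε q)ᴴ = ε q)
    (hω : 0 < ω) (hε₀ : 0 < ε₀) (hμ₀ : 0 < μ₀) (hk : kn ≠ km)
    (hEn : ContDiff ℝ (⊤ : ℕ∞) En ∧ HasCompactSupport En)
    (hHn : ContDiff ℝ (⊤ : ℕ∞) Hn ∧ HasCompactSupport Hn)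
    (hDn : ContDiff ℝ (⊤ : ℕ∞) Dn ∧ HasCompactSupport Dn)
    (hBn : ContDiff ℝ (⊤ : ℕ∞) Bn ∧ HasCompactSupport Bn)
    (hmatDn : ∀ q, Dn q = (ε₀ : ℂ) • (ε q).mulVec (En q))
    (hmatBn : ∀ q, Bn q = (μ₀ : ℂ) • Hn q)
    (hcurlEn : ∀ p, curl3 (modal En (kn : ℂ)) p = fun i => Complex.I * ω * modal Bn (kn : ℂ) p i)
    (hcurlHn : ∀ p, curl3 (modal Hn (kn : ℂ)) p = fun i => -(Complex.I * ω) * modal Dn (kn : ℂ) p i)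
    (hdivDn : ∀ p, div3 (modal Dn (kn : ℂ)) p = 0)
    (hdivBn : ∀ p, div3 (modal Bn (kn : ℂ)) p = 0)
    (hEm : ContDiff ℝ (⊤ : ℕ∞) Em ∧ HasCompactSupport Em)
    (hHm : ContDiff ℝ (⊤ : ℕ∞) Hm ∧ HasCompactSupport Hm)
    (hDm : ContDiff ℝ (⊤ : ℕ∞) Dm ∧ HasCompactSupport Dm)
    (hBm : ContDiff ℝ (⊤ : ℕ∞) Bm ∧ HasCompactSupport Bm)
    (hmatDm : ∀ q, Dm q = (ε₀ : ℂ) • (ε q).mulVec (Em q))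
    (hmatBm : ∀ q, Bm q = (μ₀ : ℂ) • Hm q)
    (hcurlEm : ∀ p, curl3 (modal Em (km : ℂ)) p = fun i => Complex.I * ω * modal Bm (km : ℂ) p i)
    (hcurlHm : ∀ p, curl3 (modal Hm (km : ℂ)) p = fun i => -(Complex.I * ω) * modal Dm (km : ℂ) p i)
    (hdivDm : ∀ p, div3 (modal Dm (km : ℂ)) p = 0)
    (hdivBm : ∀ p, div3 (modal Bm (km : ℂ)) p = 0) :
    (∫ q : ℝ × ℝ,
        (odot (En q) (cconj (Dm q)) + odot (cconj (Em q)) (Dn q)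
          + odot (cconj (Hm q)) (Bn q) + odot (Hn q) (cconj (Bm q)))) = 0 := by
  obtain ⟨hEns, hEnc⟩ := hEn
  obtain ⟨hHns, hHnc⟩ := hHn
  obtain ⟨hDns, hDnc⟩ := hDn
  obtain ⟨hBns, hBnc⟩ := hBn
  obtain ⟨hEms, hEmc⟩ := hEm
  obtain ⟨hHms, hHmc⟩ := hHm
  obtain ⟨hDms, hDmc⟩ := hDm
  obtain ⟨hBms, hBmc⟩ := hBm
  have compSmooth : ∀ X : ℝ × ℝ → Fin 3 → ℂ, ContDiff ℝ (⊤ : ℕ∞) X → ∀ i : Fin 3,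
      ContDiff ℝ (⊤ : ℕ∞) (fun r => X r i) := fun X hX i =>
    (ContinuousLinearMap.proj i : (Fin 3 → ℂ) →L[ℝ] ℂ).contDiff.comp hX
  have conjSmooth : ∀ f : ℝ × ℝ → ℂ, ContDiff ℝ (⊤ : ℕ∞) f →
      ContDiff ℝ (⊤ : ℕ∞) (fun r => (starRingEnd ℂ) (f r)) := fun f hf =>
    ((starL' ℝ : ℂ ≃L[ℝ] ℂ).toContinuousLinearMap.contDiff).comp hf
  have compSupp : ∀ X : ℝ × ℝ → Fin 3 → ℂ, HasCompactSupport X → ∀ i : Fin 3,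
      HasCompactSupport (fun r => X r i) := fun X hX i =>
    hX.comp_left (g := fun v : Fin 3 → ℂ => v i) rfl
  have hdiff : ∀ X : ℝ × ℝ → Fin 3 → ℂ, ContDiff ℝ (⊤ : ℕ∞) X → ∀ (i : Fin 3) (q : ℝ × ℝ),
      DifferentiableAt ℝ (fun r => X r i) q := fun X hX i q =>
    ((compSmooth X hX i).differentiable (by simp)) q
  have hdiffc : ∀ X : ℝ × ℝ → Fin 3 → ℂ, ContDiff ℝ (⊤ : ℕ∞) X → ∀ (i : Fin 3) (q : ℝ × ℝ),
      DifferentiableAt ℝ (fun r => (starRingEnd ℂ) (X r i)) q := fun X hX i q =>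
    ((conjSmooth _ (compSmooth X hX i)).differentiable (by simp)) q
  -- Hermitian permittivity entries
  have hconjε : ∀ (q : ℝ × ℝ) (i j : Fin 3), (starRingEnd ℂ) (ε q i j) = ε q j i := by
    intro q i j
    conv_rhs => rw [← hεH q]
    simp [Matrix.conjTranspose_apply]
  -- material identities
  have hA : ∀ q : ℝ × ℝ,
      En q 0 * (starRingEnd ℂ) (Dm q 0) + En q 1 * (starRingEnd ℂ) (Dm q 1)
        + En q 2 * (starRingEnd ℂ) (Dm q 2)
      = (starRingEnd ℂ) (Em q 0) * Dn q 0 + (starRingEnd ℂ) (Em q 1) * Dn q 1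
        + (starRingEnd ℂ) (Em q 2) * Dn q 2 := by
    intro q
    rw [hmatDn q, hmatDm q]
    simp only [Pi.smul_apply, Matrix.mulVec, dotProduct, Fin.sum_univ_three,
      smul_eq_mul, _root_.map_mul, _root_.map_add, Complex.conj_ofReal, hconjε]
    ring
  have hB : ∀ q : ℝ × ℝ,
      (starRingEnd ℂ) (Hm q 0) * Bn q 0 + (starRingEnd ℂ) (Hm q 1) * Bn q 1
        + (starRingEnd ℂ) (Hm q 2) * Bn q 2
      = Hn q 0 * (starRingEnd ℂ) (Bm q 0) + Hn q 1 * (starRingEnd ℂ) (Bm q 1)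
        + Hn q 2 * (starRingEnd ℂ) (Bm q 2) := by
    intro q
    rw [hmatBn q, hmatBm q]
    simp only [Pi.smul_apply, smul_eq_mul, _root_.map_mul, Complex.conj_ofReal]
    ring
  -- the key pointwise divergence identity
  have key : ∀ q : ℝ × ℝ,
      fderiv ℝ (fun r => En r 2 * (starRingEnd ℂ) (Dm r 0) + (starRingEnd ℂ) (Em r 2) * Dn r 0
          + (starRingEnd ℂ) (Hm r 2) * Bn r 0 + Hn r 2 * (starRingEnd ℂ) (Bm r 0)) q (1, 0)
        + fderiv ℝ (fun r => En r 2 * (starRingEnd ℂ) (Dm r 1) + (starRingEnd ℂ) (Em r 2) * Dn r 1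
          + (starRingEnd ℂ) (Hm r 2) * Bn r 1 + Hn r 2 * (starRingEnd ℂ) (Bm r 1)) q (0, 1)
      = Complex.I * ((kn : ℂ) - (km : ℂ)) *
          (odot (En q) (cconj (Dm q)) + odot (cconj (Em q)) (Dn q)
            + odot (cconj (Hm q)) (Bn q) + odot (Hn q) (cconj (Bm q))) := by
    intro q
    obtain ⟨e0, e1, -⟩ := curl_profile hEns hcurlEn q
    obtain ⟨i0, i1, -⟩ := curl_profile hHns hcurlHn q
    obtain ⟨f0, f1, -⟩ := curl_profile hEms hcurlEm q
    obtain ⟨g0, g1, -⟩ := curl_profile hHms hcurlHm q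
    have dDn := div_profile hDns hdivDn q
    have dBn := div_profile hBns hdivBn q
    have dDm := div_profile hDms hdivDm q
    have dBm := div_profile hBms hdivBm q
    replace f0 := congrArg (starRingEnd ℂ) f0
    replace f1 := congrArg (starRingEnd ℂ) f1
    replace g0 := congrArg (starRingEnd ℂ) g0
    replace g1 := congrArg (starRingEnd ℂ) g1
    replace dDm := congrArg (starRingEnd ℂ) dDm
    replace dBm := congrArg (starRingEnd ℂ) dBm
    simp only [_root_.map_add, _root_.map_sub, _root_.map_mul, _root_.map_zero, _root_.map_neg, Complex.conj_I,
      Complex.conj_ofReal] at f0 f1 g0 g1 dDm dBm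
    have a1 : DifferentiableAt ℝ (fun r => En r 2 * (starRingEnd ℂ) (Dm r 0)) q :=
      (hdiff En hEns 2 q).mul (hdiffc Dm hDms 0 q)
    have a2 : DifferentiableAt ℝ (fun r => (starRingEnd ℂ) (Em r 2) * Dn r 0) q :=
      (hdiffc Em hEms 2 q).mul (hdiff Dn hDns 0 q)
    have a3 : DifferentiableAt ℝ (fun r => (starRingEnd ℂ) (Hm r 2) * Bn r 0) q :=
      (hdiffc Hm hHms 2 q).mul (hdiff Bn hBns 0 q)
    have a4 : DifferentiableAt ℝ (fun r => Hn r 2 * (starRingEnd ℂ) (Bm r 0)) q :=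
      (hdiff Hn hHns 2 q).mul (hdiffc Bm hBms 0 q)
    have b1 : DifferentiableAt ℝ (fun r => En r 2 * (starRingEnd ℂ) (Dm r 1)) q :=
      (hdiff En hEns 2 q).mul (hdiffc Dm hDms 1 q)
    have b2 : DifferentiableAt ℝ (fun r => (starRingEnd ℂ) (Em r 2) * Dn r 1) q :=
      (hdiffc Em hEms 2 q).mul (hdiff Dn hDns 1 q)
    have b3 : DifferentiableAt ℝ (fun r => (starRingEnd ℂ) (Hm r 2) * Bn r 1) q :=
      (hdiffc Hm hHms 2 q).mul (hdiff Bn hBns 1 q)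
    have b4 : DifferentiableAt ℝ (fun r => Hn r 2 * (starRingEnd ℂ) (Bm r 1)) q :=
      (hdiff Hn hHns 2 q).mul (hdiffc Bm hBms 1 q)
    rw [fderiv_add_apply' ((a1.fun_add a2).fun_add a3) a4,
        fderiv_add_apply' (a1.fun_add a2) a3,
        fderiv_add_apply' a1 a2,
        fderiv_add_apply' ((b1.fun_add b2).fun_add b3) b4,
        fderiv_add_apply' (b1.fun_add b2) b3,
        fderiv_add_apply' b1 b2,
        fderiv_mul_apply' (hdiff En hEns 2 q) (hdiffc Dm hDms 0 q),
        fderiv_mul_apply' (hdiffc Em hEms 2 q) (hdiff Dn hDns 0 q),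
        fderiv_mul_apply' (hdiffc Hm hHms 2 q) (hdiff Bn hBns 0 q),
        fderiv_mul_apply' (hdiff Hn hHns 2 q) (hdiffc Bm hBms 0 q),
        fderiv_mul_apply' (hdiff En hEns 2 q) (hdiffc Dm hDms 1 q),
        fderiv_mul_apply' (hdiffc Em hEms 2 q) (hdiff Dn hDns 1 q),
        fderiv_mul_apply' (hdiffc Hm hHms 2 q) (hdiff Bn hBns 1 q),
        fderiv_mul_apply' (hdiff Hn hHns 2 q) (hdiffc Bm hBms 1 q)]
    simp only [fderiv_conj_apply]
    simp only [odot, cconj]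
    linear_combination
      (starRingEnd ℂ) (Dm q 1) * e0 - (starRingEnd ℂ) (Dm q 0) * e1
      + Dn q 1 * f0 - Dn q 0 * f1
      + Bn q 1 * g0 - Bn q 0 * g1
      + (starRingEnd ℂ) (Bm q 1) * i0 - (starRingEnd ℂ) (Bm q 0) * i1
      + (starRingEnd ℂ) (Em q 2) * dDn + En q 2 * dDm
      + (starRingEnd ℂ) (Hm q 2) * dBn + Hn q 2 * dBm
      + (Complex.I * ((kn : ℂ) + (km : ℂ)) / 2) * hA q
      - (Complex.I * ((kn : ℂ) + (km : ℂ)) / 2) * hB q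
  -- regularity of the flux fields
  have hGxs : ContDiff ℝ (⊤ : ℕ∞) (fun r => En r 2 * (starRingEnd ℂ) (Dm r 0)
      + (starRingEnd ℂ) (Em r 2) * Dn r 0 + (starRingEnd ℂ) (Hm r 2) * Bn r 0
      + Hn r 2 * (starRingEnd ℂ) (Bm r 0)) :=
    ((((compSmooth En hEns 2).mul (conjSmooth _ (compSmooth Dm hDms 0))).add
      ((conjSmooth _ (compSmooth Em hEms 2)).mul (compSmooth Dn hDns 0))).add
      ((conjSmooth _ (compSmooth Hm hHms 2)).mul (compSmooth Bn hBns 0))).add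
      ((compSmooth Hn hHns 2).mul (conjSmooth _ (compSmooth Bm hBms 0)))
  have hGys : ContDiff ℝ (⊤ : ℕ∞) (fun r => En r 2 * (starRingEnd ℂ) (Dm r 1)
      + (starRingEnd ℂ) (Em r 2) * Dn r 1 + (starRingEnd ℂ) (Hm r 2) * Bn r 1
      + Hn r 2 * (starRingEnd ℂ) (Bm r 1)) :=
    ((((compSmooth En hEns 2).mul (conjSmooth _ (compSmooth Dm hDms 1))).add
      ((conjSmooth _ (compSmooth Em hEms 2)).mul (compSmooth Dn hDns 1))).add
      ((conjSmooth _ (compSmooth Hm hHms 2)).mul (compSmooth Bn hBns 1))).add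
      ((compSmooth Hn hHns 2).mul (conjSmooth _ (compSmooth Bm hBms 1)))
  have hGxc : HasCompactSupport (fun r => En r 2 * (starRingEnd ℂ) (Dm r 0)
      + (starRingEnd ℂ) (Em r 2) * Dn r 0 + (starRingEnd ℂ) (Hm r 2) * Bn r 0
      + Hn r 2 * (starRingEnd ℂ) (Bm r 0)) :=
    ((((compSupp En hEnc 2).mul_right).add
      ((compSupp Dn hDnc 0).mul_left)).add
      ((compSupp Bn hBnc 0).mul_left)).add
      ((compSupp Hn hHnc 2).mul_right)
  have hGyc : HasCompactSupport (fun r => En r 2 * (starRingEnd ℂ) (Dm r 1)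
      + (starRingEnd ℂ) (Em r 2) * Dn r 1 + (starRingEnd ℂ) (Hm r 2) * Bn r 1
      + Hn r 2 * (starRingEnd ℂ) (Bm r 1)) :=
    ((((compSupp En hEnc 2).mul_right).add
      ((compSupp Dn hDnc 1).mul_left)).add
      ((compSupp Bn hBnc 1).mul_left)).add
      ((compSupp Hn hHnc 2).mul_right)
  have hkC : (kn : ℂ) ≠ (km : ℂ) := by exact_mod_cast hk
  have hΔ : Complex.I * ((kn : ℂ) - (km : ℂ)) ≠ 0 :=
    mul_ne_zero Complex.I_ne_zero (sub_ne_zero.mpr hkC)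
  calc (∫ q : ℝ × ℝ,
        (odot (En q) (cconj (Dm q)) + odot (cconj (Em q)) (Dn q)
          + odot (cconj (Hm q)) (Bn q) + odot (Hn q) (cconj (Bm q))))
      = ∫ q : ℝ × ℝ, (Complex.I * ((kn : ℂ) - (km : ℂ)))⁻¹ *
          (fderiv ℝ (fun r => En r 2 * (starRingEnd ℂ) (Dm r 0)
              + (starRingEnd ℂ) (Em r 2) * Dn r 0 + (starRingEnd ℂ) (Hm r 2) * Bn r 0
              + Hn r 2 * (starRingEnd ℂ) (Bm r 0)) q (1, 0)
            + fderiv ℝ (fun r => En r 2 * (starRingEnd ℂ) (Dm r 1)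
              + (starRingEnd ℂ) (Em r 2) * Dn r 1 + (starRingEnd ℂ) (Hm r 2) * Bn r 1
              + Hn r 2 * (starRingEnd ℂ) (Bm r 1)) q (0, 1)) := by
        congr 1
        funext q
        rw [key q, inv_mul_cancel_left₀ hΔ]
    _ = (Complex.I * ((kn : ℂ) - (km : ℂ)))⁻¹ *
          ((∫ q : ℝ × ℝ, fderiv ℝ (fun r => En r 2 * (starRingEnd ℂ) (Dm r 0)
              + (starRingEnd ℂ) (Em r 2) * Dn r 0 + (starRingEnd ℂ) (Hm r 2) * Bn r 0
              + Hn r 2 * (starRingEnd ℂ) (Bm r 0)) q (1, 0))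
            + ∫ q : ℝ × ℝ, fderiv ℝ (fun r => En r 2 * (starRingEnd ℂ) (Dm r 1)
              + (starRingEnd ℂ) (Em r 2) * Dn r 1 + (starRingEnd ℂ) (Hm r 2) * Bn r 1
              + Hn r 2 * (starRingEnd ℂ) (Bm r 1)) q (0, 1)) := by
        rw [MeasureTheory.integral_const_mul,
          integral_add (integrable_pderiv _ hGxs hGxc _) (integrable_pderiv _ hGys hGyc _)]
    _ = 0 := by
        rw [integral_pderiv_eq_zero _ hGxs hGxc, integral_pderiv_eq_zero _ hGys hGyc]
        simp
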